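/- arXiv:2601.22359 — 6 statements merged into one kernel-verified Lean document; each statement's English description precedes it below -/
import Mathlib

section
/- Let Ω be a countable set and let p, q be probability mass functions on Ω that are (ε, δ)-indistinguishable with ε > 0 and δ ≥ 0. Define the set B = {z ∈ Ω : p(z) > e^{2ε}·q(z) or p(z) < e^{−2ε}·q(z)}. Then p(B) ≤ 2δ/(1 − e^{−ε}) and q(B) ≤ 2δ/(1 − e^{−ε}); equivalently, with probability at least 1 − 2δ/(1 − e^{−ε}) over a point z drawn from either p or q, one has e^{−2ε}·q(z) ≤ p(z) ≤ e^{2ε}·q(z). -/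
open Real

lemma pmf_indist_aux {Ω : Type*} [Countable Ω] (p q : Ω → ℝ)
    (hp0 : ∀ z, 0 ≤ p z) (hq0 : ∀ z, 0 ≤ q z)
    (hp : Summable p) (hq : Summable q)
    (ε δ : ℝ) (hε : 0 < ε) (S : Set Ω)
    (hS : ∀ z ∈ S, exp (2 * ε) * q z ≤ p z)
    (hind : (∑' z : S, p z) ≤ exp ε * (∑' z : S, q z) + δ) :
    (∑' z : S, p z) ≤ δ / (1 - exp (-ε)) ∧
    (∑' z : S, q z) ≤ δ / (1 - exp (-ε)) := by
  have hpS : Summable (fun z : S => p z) := hp.subtype S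
  have hqS : Summable (fun z : S => q z) := hq.subtype S
  set a := ∑' z : S, p z with ha
  set b := ∑' z : S, q z with hb
  have ha0 : 0 ≤ a := tsum_nonneg fun z => hp0 z
  have hb0 : 0 ≤ b := tsum_nonneg fun z => hq0 z
  have hba : b ≤ exp (-(2 * ε)) * a := by
    have : b ≤ ∑' z : S, exp (-(2 * ε)) * p z := by
      apply Summable.tsum_le_tsum _ hqS (hpS.mul_left _)
      intro z
      have h := hS z z.2
      have hpos := exp_pos (2 * ε)
      rw [exp_neg, inv_mul_eq_div, le_div_iff₀ hpos]
      nlinarith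
    simpa [tsum_mul_left] using this
  have he1 : exp (-ε) < 1 := exp_lt_one_iff.2 (by linarith)
  have hden : 0 < 1 - exp (-ε) := by linarith
  have key : a ≤ exp (-ε) * a + δ := by
    have : exp ε * b ≤ exp ε * (exp (-(2 * ε)) * a) :=
      mul_le_mul_of_nonneg_left hba (exp_pos ε).le
    have heq : exp ε * exp (-(2 * ε)) = exp (-ε) := by
      rw [← exp_add]; ring_nf
    calc a ≤ exp ε * b + δ := hind
    _ ≤ exp ε * (exp (-(2 * ε)) * a) + δ := by linarith
    _ = exp (-ε) * a + δ := by rw [← mul_assoc, heq]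
  have haB : a ≤ δ / (1 - exp (-ε)) := by
    rw [le_div_iff₀ hden]; nlinarith
  refine ⟨haB, le_trans ?_ haB⟩
  calc b ≤ exp (-(2 * ε)) * a := hba
  _ ≤ 1 * a := mul_le_mul_of_nonneg_right (exp_le_one_iff.2 (by linarith)) ha0
  _ = a := one_mul a

/-- Lemma A.1 (probabilistic indistinguishability): if `p` and `q` are
(ε, δ)-indistinguishable probability mass functions on a countable set `Ω`,
then the set `B` of points where `p z > e^{2ε} q z` or `p z < e^{-2ε} q z`
has both `p`-mass and `q`-mass at most `2δ / (1 - e^{-ε})`. -/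
theorem pmf_indistinguishable_bad_set_small
    {Ω : Type*} [Countable Ω] (p q : Ω → ℝ)
    (hp0 : ∀ z, 0 ≤ p z) (hq0 : ∀ z, 0 ≤ q z)
    (hp1 : HasSum p 1) (hq1 : HasSum q 1)
    (ε δ : ℝ) (hε : 0 < ε) (hδ : 0 ≤ δ)
    (hind₁ : ∀ T : Set Ω, (∑' z : T, p z) ≤ exp ε * (∑' z : T, q z) + δ)
    (hind₂ : ∀ T : Set Ω, (∑' z : T, q z) ≤ exp ε * (∑' z : T, p z) + δ) :
    (∑' z : {z : Ω | p z > exp (2 * ε) * q z ∨ p z < exp (-(2 * ε)) * q z}, p z)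
        ≤ 2 * δ / (1 - exp (-ε)) ∧
    (∑' z : {z : Ω | p z > exp (2 * ε) * q z ∨ p z < exp (-(2 * ε)) * q z}, q z)
        ≤ 2 * δ / (1 - exp (-ε)) := by
  have hp := hp1.summable
  have hq := hq1.summable
  set B₁ : Set Ω := {z | p z > exp (2 * ε) * q z} with hB₁
  set B₂ : Set Ω := {z | p z < exp (-(2 * ε)) * q z} with hB₂
  have hBeq : {z : Ω | p z > exp (2 * ε) * q z ∨ p z < exp (-(2 * ε)) * q z} = B₁ ∪ B₂ := rfl
  have hdisj : Disjoint B₁ B₂ := by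
    rw [Set.disjoint_left]
    intro z h1 h2
    simp only [hB₁, hB₂, Set.mem_setOf_eq] at h1 h2
    have hq0z := hq0 z
    have h3 : exp (-(2 * ε)) ≤ exp (2 * ε) := exp_le_exp.2 (by linarith)
    nlinarith
  -- B₁ bound via aux with (p, q)
  have h1 := pmf_indist_aux p q hp0 hq0 hp hq ε δ hε B₁
    (fun z hz => le_of_lt hz) (hind₁ B₁)
  -- B₂ bound via aux with (q, p)
  have h2 := pmf_indist_aux q p hq0 hp0 hq hp ε δ hε B₂
    (fun z hz => by
      simp only [hB₂, Set.mem_setOf_eq] at hz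
      have := exp_pos (2 * ε)
      have heq : exp (2 * ε) * exp (-(2 * ε)) = 1 := by
        rw [← exp_add]; ring_nf; exact exp_zero
      have h4 : exp (2 * ε) * p z < exp (2 * ε) * (exp (-(2 * ε)) * q z) :=
        mul_lt_mul_of_pos_left hz this
      rw [← mul_assoc, heq, one_mul] at h4
      exact h4.le) (hind₂ B₂)
  have he1 : exp (-ε) < 1 := exp_lt_one_iff.2 (by linarith)
  have hden : 0 < 1 - exp (-ε) := by linarith
  have hsum_p : (∑' z : ↥(B₁ ∪ B₂), p z) = (∑' z : B₁, p z) + (∑' z : B₂, p z) :=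
    Summable.tsum_union_disjoint hdisj (hp.subtype B₁) (hp.subtype B₂)
  have hsum_q : (∑' z : ↥(B₁ ∪ B₂), q z) = (∑' z : B₁, q z) + (∑' z : B₂, q z) :=
    Summable.tsum_union_disjoint hdisj (hq.subtype B₁) (hq.subtype B₂)
  rw [hBeq]
  constructor
  · rw [hsum_p]
    have := h1.1
    have := h2.2
    calc (∑' z : B₁, p z) + (∑' z : B₂, p z) ≤ δ / (1 - exp (-ε)) + δ / (1 - exp (-ε)) := by
          linarith
    _ = 2 * δ / (1 - exp (-ε)) := by ring
  · rw [hsum_q]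
    calc (∑' z : B₁, q z) + (∑' z : B₂, q z) ≤ δ / (1 - exp (-ε)) + δ / (1 - exp (-ε)) := by
          have := h1.2; have := h2.1; linarith
    _ = 2 * δ / (1 - exp (-ε)) := by ring
end

section
/- Let Ω be a countable set, let p and q be probability mass functions on Ω, and let ε > 0 and δ ≥ 0 be such that for every subset T ⊆ Ω, p(T) ≤ e^{ε}·q(T) + δ. Define Z = {z ∈ Ω : p(z) > e^{2ε}·q(z)}. Then q(Z) ≤ δ/(e^{2ε} − e^{ε}) = δ/(e^{2ε}(1 − e^{−ε})). -/
open Real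

/-- Eq. (A.2) in the proof of Lemma A.1: if for every subset `T` one has
`p(T) ≤ e^ε q(T) + δ`, then the set `Z = {z | p z > e^{2ε} q z}` satisfies
`q(Z) ≤ δ / (e^{2ε} - e^{ε})`. -/
theorem pmf_one_sided_bad_set_small
    {Ω : Type*} [Countable Ω] (p q : Ω → ℝ)
    (hp0 : ∀ z, 0 ≤ p z) (hq0 : ∀ z, 0 ≤ q z)
    (hp1 : HasSum p 1) (hq1 : HasSum q 1)
    (ε δ : ℝ) (hε : 0 < ε) (hδ : 0 ≤ δ)
    (hind : ∀ T : Set Ω, (∑' z : T, p z) ≤ exp ε * (∑' z : T, q z) + δ) :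
    (∑' z : {z : Ω | p z > exp (2 * ε) * q z}, q z) ≤ δ / (exp (2 * ε) - exp ε) := by
  set Z : Set Ω := {z : Ω | p z > exp (2 * ε) * q z} with hZ
  have hps : Summable p := hp1.summable
  have hqs : Summable q := hq1.summable
  have h1 : exp (2 * ε) * (∑' z : Z, q z) ≤ ∑' z : Z, p z := by
    rw [← tsum_mul_left]
    refine Summable.tsum_le_tsum (fun z => (z.2 : p z.1 > exp (2 * ε) * q z.1).le)
      ((hqs.subtype Z).mul_left _) (hps.subtype Z)
  have h2 := hind Z
  have hlt : exp ε < exp (2 * ε) := exp_lt_exp.mpr (by linarith)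
  have hpos : 0 < exp (2 * ε) - exp ε := by linarith
  rw [le_div_iff₀ hpos]
  nlinarith [h1, h2, (tsum_nonneg (fun z : Z => hq0 z.1) : 0 ≤ ∑' z : Z, q z)]
end

section
/- Let Ω be a countable set and let p, q be probability mass functions on Ω that are (ε, δ)-indistinguishable with ε > 0 and δ ≥ 0. Define Z' = {z ∈ Ω : p(z) < e^{−2ε}·q(z)}. Then p(Z') ≤ δ/(e^{2ε} − e^{ε}) and q(Z') ≤ δ/(1 − e^{−ε}). -/
open Real

/-- Eq. (A.3) in the proof of Lemma A.1: for (ε, δ)-indistinguishable pmfs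
`p`, `q`, the set `Z' = {z | p z < e^{-2ε} q z}` satisfies
`p(Z') ≤ δ / (e^{2ε} - e^{ε})` and `q(Z') ≤ δ / (1 - e^{-ε})`. -/
theorem pmf_indistinguishable_lower_bad_set_small
    {Ω : Type*} [Countable Ω] (p q : Ω → ℝ)
    (hp0 : ∀ z, 0 ≤ p z) (hq0 : ∀ z, 0 ≤ q z)
    (hp1 : HasSum p 1) (hq1 : HasSum q 1)
    (ε δ : ℝ) (hε : 0 < ε) (hδ : 0 ≤ δ)
    (hind₁ : ∀ T : Set Ω, (∑' z : T, p z) ≤ exp ε * (∑' z : T, q z) + δ)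
    (hind₂ : ∀ T : Set Ω, (∑' z : T, q z) ≤ exp ε * (∑' z : T, p z) + δ) :
    (∑' z : {z : Ω | p z < exp (-(2 * ε)) * q z}, p z) ≤ δ / (exp (2 * ε) - exp ε) ∧
    (∑' z : {z : Ω | p z < exp (-(2 * ε)) * q z}, q z) ≤ δ / (1 - exp (-ε)) := by
  set T : Set Ω := {z : Ω | p z < exp (-(2 * ε)) * q z} with hT
  have hps : Summable (fun z : T => p z) := hp1.summable.subtype T
  have hqs : Summable (fun z : T => q z) := hq1.summable.subtype T
  set P := ∑' z : T, p z with hP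
  set Q := ∑' z : T, q z with hQ
  have hPQ : P ≤ exp (-(2 * ε)) * Q := by
    calc P ≤ ∑' z : T, exp (-(2 * ε)) * q z :=
          Summable.tsum_le_tsum (fun z => le_of_lt z.2) hps (hqs.mul_left _)
      _ = exp (-(2 * ε)) * Q := tsum_mul_left
  have heps1 : exp (-ε) < 1 := exp_lt_one_iff.2 (by linarith)
  have hden : 0 < 1 - exp (-ε) := by linarith
  have hQnn : 0 ≤ Q := tsum_nonneg fun z => hq0 z
  have hQb : Q ≤ δ / (1 - exp (-ε)) := by
    have h1 : Q ≤ exp ε * P + δ := hind₂ T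
    have h2 : exp ε * P ≤ exp ε * (exp (-(2 * ε)) * Q) :=
      mul_le_mul_of_nonneg_left hPQ (exp_pos ε).le
    have h3 : exp ε * (exp (-(2 * ε)) * Q) = exp (-ε) * Q := by
      rw [← mul_assoc, ← exp_add]; ring_nf
    rw [le_div_iff₀ hden]
    nlinarith
  constructor
  · have : P ≤ exp (-(2 * ε)) * (δ / (1 - exp (-ε))) := by
      refine hPQ.trans ?_
      exact mul_le_mul_of_nonneg_left hQb (exp_pos _).le
    refine this.trans (le_of_eq ?_)
    have he : exp (2 * ε) - exp ε ≠ 0 := by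
      have : exp ε < exp (2 * ε) := exp_lt_exp.2 (by linarith)
      linarith
    rw [exp_neg]
    field_simp
    have hx : exp (2 * ε) * exp (-ε) = exp ε := by
      rw [← exp_add, show 2 * ε + -ε = ε by ring]
    linear_combination δ * hx
  · exact hQb
end

section
/- Let Ω be a countable set and let p, q be probability mass functions on Ω that are (ε, δ)-indistinguishable with ε > 0 and δ ≥ 0. Define Z = {z ∈ Ω : p(z) > e^{2ε}·q(z)}. Then p(Z) ≤ δ/(1 − e^{−ε}). -/
/-! On `Z` we have `q ≤ e^{-2ε} p` pointwise, so indistinguishability applied to `Z` itself gives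
`p(Z) ≤ e^{ε} q(Z) + δ ≤ e^{-ε} p(Z) + δ`, and solving for `p(Z)` gives the bound. -/

open Real

theorem mul_tsum_le_tsum_of_forall_mul_le {ι : Type*} {f g : ι → ℝ} (hf : Summable f)
    (hg : Summable g) {c : ℝ} (h : ∀ i, c * f i ≤ g i) : c * ∑' i, f i ≤ ∑' i, g i := by
  rw [← tsum_mul_left]
  exact (hf.mul_left c).tsum_le_tsum h hg

theorem le_div_one_sub_of_le_mul_add {x a δ : ℝ} (ha : a < 1) (h : x ≤ a * x + δ) :
    x ≤ δ / (1 - a) := by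
  rw [le_div_iff₀ (sub_pos.mpr ha)]
  linarith

theorem pmf_indistinguishable_upper_bad_set_small_general
    {Ω : Type*} (p q : Ω → ℝ)
    (hp1 : HasSum p 1) (hq1 : HasSum q 1)
    (ε δ : ℝ) (hε : 0 < ε)
    (hind₁ : ∀ T : Set Ω, (∑' z : T, p z) ≤ exp ε * (∑' z : T, q z) + δ) :
    (∑' z : {z : Ω | p z > exp (2 * ε) * q z}, p z) ≤ δ / (1 - exp (-ε)) := by
  set Z : Set Ω := {z : Ω | p z > exp (2 * ε) * q z}
  have hqpZ : exp (2 * ε) * ∑' z : Z, q z ≤ ∑' z : Z, p z :=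
    mul_tsum_le_tsum_of_forall_mul_le (hq1.summable.subtype Z) (hp1.summable.subtype Z)
      fun z => z.2.le
  refine le_div_one_sub_of_le_mul_add (exp_lt_one_iff.mpr (neg_lt_zero.mpr hε)) ?_
  calc ∑' z : Z, p z ≤ exp ε * ∑' z : Z, q z + δ := hind₁ Z
    _ = exp (-ε) * (exp (2 * ε) * ∑' z : Z, q z) + δ := by
      rw [← mul_assoc, ← exp_add]; ring_nf
    _ ≤ exp (-ε) * ∑' z : Z, p z + δ := by gcongr

/-- Symmetric intermediate bound in the proof of Lemma A.1: for
(ε, δ)-indistinguishable pmfs `p`, `q`, the set `Z = {z | p z > e^{2ε} q z}`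
satisfies `p(Z) ≤ δ / (1 - e^{-ε})`. -/
theorem pmf_indistinguishable_upper_bad_set_small
    {Ω : Type*} [Countable Ω] (p q : Ω → ℝ)
    (hp0 : ∀ z, 0 ≤ p z) (hq0 : ∀ z, 0 ≤ q z)
    (hp1 : HasSum p 1) (hq1 : HasSum q 1)
    (ε δ : ℝ) (hε : 0 < ε) (hδ : 0 ≤ δ)
    (hind₁ : ∀ T : Set Ω, (∑' z : T, p z) ≤ exp ε * (∑' z : T, q z) + δ)
    (hind₂ : ∀ T : Set Ω, (∑' z : T, q z) ≤ exp ε * (∑' z : T, p z) + δ) :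
    (∑' z : {z : Ω | p z > exp (2 * ε) * q z}, p z) ≤ δ / (1 - exp (-ε)) :=
  pmf_indistinguishable_upper_bad_set_small_general p q hp1 hq1 ε δ hε hind₁
end

section
/- Let 𝒴 be a countable label set, let p and q be probability mass functions on 𝒴 (the output distributions at a perturbed input of the unlearned model and of the re-trained model, whose draws are independent), and let y ∈ 𝒴 satisfy q(y) > 0. Set r = p(y)/q(y) (the residual knowledge at y) and let D = ∑_{l ∈ 𝒴} p(l)·(1 − q(l)) denote the probability that two independent draws l ∼ p and l' ∼ q satisfy l ≠ l' (the expected adversarial disagreement). Then r·q(y)·(1 − q(y)) ≤ D ≤ 1 − r·q(y)². -/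
/-! Writing `D = 1 - ∑' l, p l * q l`, dropping all terms but the one at `y` from either
sum gives `p y * (1 - q y) ≤ D ≤ 1 - p y * q y`, and `r * q y ≤ p y` turns these into the
claimed bounds. -/

-- `a / 0 * 0 = 0`, so this is an inequality rather than `div_mul_cancel₀`.
lemma div_mul_le_self_of_nonneg {K : Type*} [Field K] [LinearOrder K] [IsStrictOrderedRing K]
    {a : K} (ha : 0 ≤ a) (b : K) : a / b * b ≤ a := by
  rcases eq_or_ne b 0 with rfl | hb
  · simpa using ha
  · rw [div_mul_cancel₀ a hb]

section Pmf

variable {Y : Type*} {p q : Y → ℝ}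

lemma HasSum.le_one_of_nonneg (hq0 : ∀ l, 0 ≤ q l) (hq1 : HasSum q 1) (l : Y) : q l ≤ 1 :=
  le_hasSum hq1 l fun i _ => hq0 i

lemma Summable.mul_of_nonneg_of_le_one (hp : Summable p) (hp0 : ∀ l, 0 ≤ p l)
    (hq0 : ∀ l, 0 ≤ q l) (hq1 : ∀ l, q l ≤ 1) : Summable fun l => p l * q l :=
  hp.of_nonneg_of_le (fun l => mul_nonneg (hp0 l) (hq0 l))
    fun l => mul_le_of_le_one_right (hp0 l) (hq1 l)

lemma HasSum.mul_one_sub (hp1 : HasSum p 1) (hpq : Summable fun l => p l * q l) :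
    HasSum (fun l => p l * (1 - q l)) (1 - ∑' l, p l * q l) := by
  simpa only [_root_.mul_one_sub] using hp1.sub hpq.hasSum

end Pmf

theorem residual_knowledge_bounds_disagreement_general
    {Y : Type*} (p q : Y → ℝ)
    (hp0 : ∀ l, 0 ≤ p l) (hq0 : ∀ l, 0 ≤ q l)
    (hp1 : HasSum p 1) (hq1 : HasSum q 1)
    (y : Y) :
    (p y / q y) * q y * (1 - q y) ≤ (∑' l, p l * (1 - q l)) ∧
    (∑' l, p l * (1 - q l)) ≤ 1 - (p y / q y) * (q y) ^ 2 := by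
  have hq_le_one := hq1.le_one_of_nonneg hq0
  have hr : p y / q y * q y ≤ p y := div_mul_le_self_of_nonneg (hp0 y) (q y)
  have hpq := hp1.summable.mul_of_nonneg_of_le_one hp0 hq0 hq_le_one
  have hD := hp1.mul_one_sub hpq
  rw [hD.tsum_eq]
  constructor
  · calc p y / q y * q y * (1 - q y) ≤ p y * (1 - q y) :=
          mul_le_mul_of_nonneg_right hr (sub_nonneg.2 (hq_le_one y))
      _ ≤ 1 - ∑' l, p l * q l :=
          le_hasSum hD y fun l _ => mul_nonneg (hp0 l) (sub_nonneg.2 (hq_le_one l))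
  · calc 1 - ∑' l, p l * q l ≤ 1 - p y * q y :=
          sub_le_sub_left (hpq.le_tsum y fun l _ => mul_nonneg (hp0 l) (hq0 l)) 1
      _ ≤ 1 - p y / q y * q y ^ 2 := by
          rw [sq, ← mul_assoc]
          exact sub_le_sub_left (mul_le_mul_of_nonneg_right hr (hq0 y)) 1

/-- Lemma A.4 (bounding adversarial disagreement with residual knowledge):
for pmfs `p`, `q` on a countable label set, a label `y` with `q y > 0`,
residual knowledge `r = p y / q y`, and expected adversarial disagreement
`D = ∑' l, p l * (1 - q l)`, one has
`r * q y * (1 - q y) ≤ D ≤ 1 - r * (q y)^2`. -/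
theorem residual_knowledge_bounds_disagreement
    {Y : Type*} [Countable Y] (p q : Y → ℝ)
    (hp0 : ∀ l, 0 ≤ p l) (hq0 : ∀ l, 0 ≤ q l)
    (hp1 : HasSum p 1) (hq1 : HasSum q 1)
    (y : Y) (hy : 0 < q y) :
    (p y / q y) * q y * (1 - q y) ≤ (∑' l, p l * (1 - q l)) ∧
    (∑' l, p l * (1 - q l)) ≤ 1 - (p y / q y) * (q y) ^ 2 :=
  residual_knowledge_bounds_disagreement_general p q hp0 hq0 hp1 hq1 y
end

section
/- Let H be a countable set (the hypothesis space) and X a countable set (the sample space). Let p and q be probability mass functions on H that are (ε, δ)-indistinguishable with ε > 0 and δ ≥ 0 (the distributions of the unlearned and re-trained models), and let κ assign to each h ∈ H a probability mass function κ(h) on X (the distribution of the adversarial example crafted against model h). Define B = {h ∈ H : p(h) > e^{2ε}·q(h) or p(h) < e^{−2ε}·q(h)}. Then p(B) ≤ 2δ/(1 − e^{−ε}) and q(B) ≤ 2δ/(1 − e^{−ε}); moreover, for every h ∈ B and every subset X' ⊆ X, either p(h)·κ(h)(X') ≥ e^{2ε}·q(h)·κ(h)(X') or p(h)·κ(h)(X')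 ≤ e^{−2ε}·q(h)·κ(h)(X'). -/
/-!
On `B₁ = {p > e^{2ε} q}` we have `q(B₁) ≤ e^{-2ε} p(B₁)`, so indistinguishability gives
`p(B₁) ≤ e^{ε} q(B₁) + δ ≤ e^{-ε} p(B₁) + δ`, i.e. `p(B₁) ≤ δ / (1 - e^{-ε})`, and `q(B₁) ≤ p(B₁)`.
The set `B₂ = {p < e^{-2ε} q}` is handled symmetrically, and `B = B₁ ∪ B₂`.
The separation of the joint probabilities is the defining inequality of `B` multiplied by
`κ h (X') ≥ 0`.
-/

open Real

section

variable {α : Type*} {f g : α → ℝ} {s : Set α}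

theorem tsum_subtype_union_le (hf0 : ∀ x, 0 ≤ f x) (hf : Summable f) (s t : Set α) :
    ∑' x : ↑(s ∪ t), f x ≤ ∑' x : s, f x + ∑' x : t, f x := by
  rw [← Set.union_sdiff_self,
    (hf.subtype s).tsum_union_disjoint Set.disjoint_sdiff_right (hf.subtype _)]
  gcongr
  exact (hf.subtype _).tsum_le_tsum_of_inj (Set.inclusion Set.sdiff_subset)
    (Set.inclusion_injective _) (fun x _ => hf0 x) (fun _ => le_rfl) (hf.subtype t)

theorem tsum_subtype_le_mul_of_le_mul {r : ℝ} (hf : Summable f) (hg : Summable g)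
    (hgf : ∀ x ∈ s, g x ≤ r * f x) : ∑' x : s, g x ≤ r * ∑' x : s, f x := by
  rw [← tsum_mul_left]
  exact (hg.subtype s).tsum_le_tsum (fun x => hgf x x.2) ((hf.subtype s).mul_left r)

theorem tsum_subtype_le_div_of_le_mul_add {a r δ : ℝ} (ha : 0 ≤ a) (har : a * r < 1)
    (hf : Summable f) (hg : Summable g) (hgf : ∀ x ∈ s, g x ≤ r * f x)
    (hind : ∑' x : s, f x ≤ a * ∑' x : s, g x + δ) :
    ∑' x : s, f x ≤ δ / (1 - a * r) := by
  have hgs := tsum_subtype_le_mul_of_le_mul hf hg hgf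
  rw [le_div_iff₀ (by linarith)]
  nlinarith [mul_le_mul_of_nonneg_left hgs ha]

theorem tsum_subtype_le_of_le_exp_neg_two_mul {ε δ : ℝ} (hε : 0 < ε)
    (hf0 : ∀ x, 0 ≤ f x) (hf : Summable f) (hg : Summable g)
    (hind : ∀ T : Set α, ∑' x : T, f x ≤ exp ε * ∑' x : T, g x + δ)
    (hgf : ∀ x ∈ s, g x ≤ exp (-(2 * ε)) * f x) :
    ∑' x : s, f x ≤ δ / (1 - exp (-ε)) ∧ ∑' x : s, g x ≤ δ / (1 - exp (-ε)) := by
  have hexp : exp ε * exp (-(2 * ε)) = exp (-ε) := by rw [← exp_add]; ring_nf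
  have hf_le : ∑' x : s, f x ≤ δ / (1 - exp (-ε)) := by
    rw [← hexp]
    exact tsum_subtype_le_div_of_le_mul_add (exp_pos ε).le
      (by rw [hexp]; exact exp_lt_one_iff.2 (neg_lt_zero.2 hε)) hf hg hgf (hind s)
  refine ⟨hf_le, le_trans ?_ hf_le⟩
  calc ∑' x : s, g x ≤ exp (-(2 * ε)) * ∑' x : s, f x := tsum_subtype_le_mul_of_le_mul hf hg hgf
    _ ≤ ∑' x : s, f x :=
      mul_le_of_le_one_left (tsum_nonneg fun x => hf0 x) (exp_le_one_iff.2 (by linarith))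

end

theorem adversarial_example_less_indistinguishable_general
    {H X : Type*} (p q : H → ℝ)
    (hp0 : ∀ h, 0 ≤ p h) (hq0 : ∀ h, 0 ≤ q h)
    (hp1 : HasSum p 1) (hq1 : HasSum q 1)
    (ε δ : ℝ) (hε : 0 < ε)
    (hind₁ : ∀ T : Set H, (∑' h : T, p h) ≤ exp ε * (∑' h : T, q h) + δ)
    (hind₂ : ∀ T : Set H, (∑' h : T, q h) ≤ exp ε * (∑' h : T, p h) + δ)
    (κ : H → X → ℝ)
    (hκ0 : ∀ h x, 0 ≤ κ h x) :
    (∑' h : {h : H | p h > exp (2 * ε) * q h ∨ p h < exp (-(2 * ε)) * q h}, p h)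
        ≤ 2 * δ / (1 - exp (-ε)) ∧
    (∑' h : {h : H | p h > exp (2 * ε) * q h ∨ p h < exp (-(2 * ε)) * q h}, q h)
        ≤ 2 * δ / (1 - exp (-ε)) ∧
    ∀ h ∈ {h : H | p h > exp (2 * ε) * q h ∨ p h < exp (-(2 * ε)) * q h},
      ∀ X' : Set X,
        exp (2 * ε) * (q h * (∑' x : X', κ h x)) ≤ p h * (∑' x : X', κ h x) ∨
        p h * (∑' x : X', κ h x) ≤ exp (-(2 * ε)) * (q h * (∑' x : X', κ h x)) := by
  obtain ⟨hpB₁, hqB₁⟩ := tsum_subtype_le_of_le_exp_neg_two_mul (s := {h | p h > exp (2 * ε) * q h})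
    hε hp0 hp1.summable hq1.summable hind₁ fun h hh => by
      rw [exp_neg, ← div_eq_inv_mul, le_div_iff₀' (exp_pos _)]
      exact le_of_lt hh
  obtain ⟨hqB₂, hpB₂⟩ := tsum_subtype_le_of_le_exp_neg_two_mul
    (s := {h | p h < exp (-(2 * ε)) * q h}) hε hq0 hq1.summable hp1.summable hind₂
    fun h hh => le_of_lt hh
  have htwice : ∀ a b : ℝ, a ≤ δ / (1 - exp (-ε)) → b ≤ δ / (1 - exp (-ε)) →
      a + b ≤ 2 * δ / (1 - exp (-ε)) := fun a b ha hb => by rw [mul_div_assoc]; linarith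
  refine ⟨(tsum_subtype_union_le hp0 hp1.summable _ _).trans (htwice _ _ hpB₁ hpB₂),
    (tsum_subtype_union_le hq0 hq1.summable _ _).trans (htwice _ _ hqB₁ hqB₂), ?_⟩
  intro h hh X'
  have hκX' : 0 ≤ ∑' x : X', κ h x := tsum_nonneg fun x => hκ0 h x
  rw [← mul_assoc, ← mul_assoc]
  exact hh.imp (fun hgt => mul_le_mul_of_nonneg_right hgt.le hκX')
    (fun hlt => mul_le_mul_of_nonneg_right hlt.le hκX')

/-- Proposition 1: let `p`, `q` be (ε, δ)-indistinguishable pmfs on a countable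
hypothesis space `H`, and let `κ h` be the pmf on the sample space `X` of the
adversarial example crafted against model `h`. Then the set
`B = {h | p h > e^{2ε} q h ∨ p h < e^{-2ε} q h}` has `p`- and `q`-mass at most
`2δ / (1 - e^{-ε})`, and for every `h ∈ B` and every `X' ⊆ X`, the joint
probabilities `p h * κ h (X')` and `q h * κ h (X')` are separated by a factor
of `e^{2ε}` (in one direction or the other). -/
theorem adversarial_example_less_indistinguishable
    {H X : Type*} [Countable H] [Countable X] (p q : H → ℝ)
    (hp0 : ∀ h, 0 ≤ p h) (hq0 : ∀ h, 0 ≤ q h)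
    (hp1 : HasSum p 1) (hq1 : HasSum q 1)
    (ε δ : ℝ) (hε : 0 < ε) (hδ : 0 ≤ δ)
    (hind₁ : ∀ T : Set H, (∑' h : T, p h) ≤ exp ε * (∑' h : T, q h) + δ)
    (hind₂ : ∀ T : Set H, (∑' h : T, q h) ≤ exp ε * (∑' h : T, p h) + δ)
    (κ : H → X → ℝ)
    (hκ0 : ∀ h x, 0 ≤ κ h x) (hκ1 : ∀ h, HasSum (κ h) 1) :
    (∑' h : {h : H | p h > exp (2 * ε) * q h ∨ p h < exp (-(2 * ε)) * q h}, p h)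
        ≤ 2 * δ / (1 - exp (-ε)) ∧
    (∑' h : {h : H | p h > exp (2 * ε) * q h ∨ p h < exp (-(2 * ε)) * q h}, q h)
        ≤ 2 * δ / (1 - exp (-ε)) ∧
    ∀ h ∈ {h : H | p h > exp (2 * ε) * q h ∨ p h < exp (-(2 * ε)) * q h},
      ∀ X' : Set X,
        exp (2 * ε) * (q h * (∑' x : X', κ h x)) ≤ p h * (∑' x : X', κ h x) ∨
        p h * (∑' x : X', κ h x) ≤ exp (-(2 * ε)) * (q h * (∑' x : X', κ h x)) :=
  adversarial_example_less_indistinguishable_general p q hp0 hq0 hp1 hq1 ε δ hε hind₁ hind₂ κ hκ0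
end
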